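/- arXiv:1712.05742 — 2 statements merged into one kernel-verified Lean document; each statement's English description precedes it below -/
import Mathlib

section
/- Let k be a positive integer and let (A,B) be a real 2k×2k pencil with minimal ranks ρ(A,B) = (2k, 2k−1); explicitly, there exists (t₀,u₀) ∈ ℝ²\{(0,0)} with rank(t₀A + u₀B) = 2k−1, and rank(tA + uB) = 2k for every (t,u) ∈ ℝ² not in the span of (t₀,u₀). Then the infimum over (A',B') ∈ B_{2k−1,2k−1} of ‖(A,B) − (A',B')‖ equals 0, and it is not attained by any (A',B') ∈ B_{2k−1,2k−1}. -/
open Matrix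

/-- Squared Frobenius norm of a matrix. -/
noncomputable def frobSq {m n : ℕ} (A : Matrix (Fin m) (Fin n) ℝ) : ℝ :=
  ∑ i, ∑ j, ‖A i j‖ ^ 2

/-- Distance between two pencils induced by the norm
`‖(A, B)‖ = √(‖A‖_F² + ‖B‖_F²)`. -/
noncomputable def pdist {m n : ℕ}
    (p q : Matrix (Fin m) (Fin n) ℝ × Matrix (Fin m) (Fin n) ℝ) : ℝ :=
  Real.sqrt (frobSq (p.1 - q.1) + frobSq (p.2 - q.2))

/-- Membership in `B_{2k-1,2k-1}`: there exist two linearly independent pairs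
`(t₁, u₁), (t₂, u₂)` with `rank (tᵢ A + uᵢ B) ≤ 2k - 1` for `i = 1, 2`. -/
def InBLowMinRanks {k : ℕ}
    (A B : Matrix (Fin (2 * k)) (Fin (2 * k)) ℝ) : Prop :=
  ∃ t₁ u₁ t₂ u₂ : ℝ,
    LinearIndependent ℝ ![((t₁, u₁) : ℝ × ℝ), ((t₂, u₂) : ℝ × ℝ)] ∧
    (t₁ • A + u₁ • B).rank ≤ 2 * k - 1 ∧
    (t₂ • A + u₂ • B).rank ≤ 2 * k - 1

namespace NoBestAux

open Polynomial

/-! ### Rank and determinant -/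

lemma rank_lt_of_det_eq_zero {n : ℕ} (hn : 0 < n) (M : Matrix (Fin n) (Fin n) ℝ)
    (h : M.det = 0) : M.rank < n := by
  obtain ⟨v, hv0, hv⟩ := Matrix.exists_mulVec_eq_zero_iff.mpr h
  have hker : Submodule.span ℝ {v} ≤ LinearMap.ker M.mulVecLin := by
    rw [Submodule.span_singleton_le_iff_mem]
    exact LinearMap.mem_ker.mpr (by simpa [Matrix.mulVecLin_apply] using hv)
  have h1 : 1 ≤ Module.finrank ℝ (LinearMap.ker M.mulVecLin) := by
    have hss := finrank_span_singleton (K := ℝ) hv0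
    exact hss ▸ Submodule.finrank_mono hker
  have h2 := LinearMap.finrank_range_add_finrank_ker M.mulVecLin
  have h3 : Module.finrank ℝ (Fin n → ℝ) = n := by simp
  rw [h3] at h2
  have h4 : M.rank = Module.finrank ℝ (LinearMap.range M.mulVecLin) := rfl
  omega

lemma rank_eq_of_det_ne_zero {n : ℕ} (M : Matrix (Fin n) (Fin n) ℝ)
    (h : M.det ≠ 0) : M.rank = n := by
  have := Matrix.rank_of_isUnit M ((Matrix.isUnit_iff_isUnit_det M).mpr (isUnit_iff_ne_zero.mpr h))
  simpa using this

/-! ### Adjugate of a rank `n-1` matrix is nonzero -/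

lemma adjugate_ne_zero {n : ℕ} (hn : 0 < n) (M : Matrix (Fin n) (Fin n) ℝ)
    (h : M.rank = n - 1) : M.adjugate ≠ 0 := by
  intro hadj
  have hC : Module.finrank ℝ (Submodule.span ℝ (Set.range M)) = n - 1 := by
    exact (Matrix.rank_eq_finrank_span_row M).symm.trans h
  -- some row is in the span of the others
  have hex : ∃ a : Fin n, M a ∈ Submodule.span ℝ (M '' (Set.univ \ {a})) := by
    by_contra hno
    push_neg at hno
    have hli : LinearIndependent ℝ M := linearIndependent_iff_notMem_span.mpr hno
    have hcard := finrank_span_eq_card hli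
    rw [Fintype.card_fin] at hcard
    omega
  obtain ⟨a, ha⟩ := hex
  have hCsub : Submodule.span ℝ (M '' (Set.univ \ {a})) = Submodule.span ℝ (Set.range M) := by
    apply le_antisymm
    · exact Submodule.span_mono (by rintro x ⟨i, _, rfl⟩; exact ⟨i, rfl⟩)
    · rw [Submodule.span_le]
      rintro x ⟨i, rfl⟩
      by_cases hi : i = a
      · subst hi; exact ha
      · exact Submodule.subset_span ⟨i, ⟨trivial, hi⟩, rfl⟩
  -- a vector outside the row span
  obtain ⟨w, hw⟩ : ∃ w, w ∉ Submodule.span ℝ (Set.range M) := by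
    by_contra hall
    push_neg at hall
    have htop : Submodule.span ℝ (Set.range M) = ⊤ := Submodule.eq_top_iff'.mpr hall
    rw [htop, finrank_top] at hC
    have : Module.finrank ℝ (Fin n → ℝ) = n := by simp
    omega
  set M' := M.updateRow a w with hM'
  -- the updated matrix has full rank
  have hsub : Submodule.span ℝ (Set.range M) ⊔ Submodule.span ℝ {w}
      ≤ Submodule.span ℝ (Set.range M') := by
    apply sup_le
    · rw [← hCsub, Submodule.span_le]
      rintro x ⟨i, ⟨-, hi⟩, rfl⟩
      have hia : i ≠ a := hi
      have : M' i = M i := Matrix.updateRow_ne hia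
      exact this ▸ Submodule.subset_span ⟨i, rfl⟩
    · rw [Submodule.span_le, Set.singleton_subset_iff]
      have : M' a = w := Matrix.updateRow_self
      exact this ▸ Submodule.subset_span ⟨a, rfl⟩
  have hlt : Submodule.span ℝ (Set.range M) <
      Submodule.span ℝ (Set.range M) ⊔ Submodule.span ℝ {w} := by
    refine lt_of_le_of_ne le_sup_left ?_
    intro heq
    apply hw
    rw [heq]
    exact Submodule.mem_sup_right (Submodule.mem_span_singleton_self w)
  have hfr : n ≤ Module.finrank ℝ (Submodule.span ℝ (Set.range M')) := by
    have h1 := Submodule.finrank_lt_finrank_of_lt hlt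
    have h2 := Submodule.finrank_mono hsub
    omega
  have hrank' : M'.rank = n := by
    have h1 : M'.rank ≤ n := by
      have := Matrix.rank_le_card_width M'
      simpa using this
    have h2 : n ≤ M'.rank := by
      rw [Matrix.rank_eq_finrank_span_row M']
      exact hfr
    omega
  have hdet' : M'.det ≠ 0 := by
    intro h0
    have := rank_lt_of_det_eq_zero hn M' h0
    omega
  apply hdet'
  have : M'.det = ((M.adjugate)ᵀ *ᵥ w) a := by
    rw [← Matrix.det_transpose M', hM']
    rw [show (M.updateRow a w)ᵀ = Mᵀ.updateCol a w from (Matrix.updateCol_transpose).symm]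
    rw [← Matrix.cramer_apply, Matrix.cramer_eq_adjugate_mulVec, Matrix.adjugate_transpose]
  rw [this, hadj]
  simp

/-! ### Odd degree real polynomials have roots -/

lemma exists_root_aux (p : ℝ[X]) (h : Odd p.natDegree) (hlc : 0 < p.leadingCoeff) :
    ∃ x, p.eval x = 0 := by
  have hdeg_pos : 0 < p.natDegree := by
    rcases h with ⟨j, hj⟩; omega
  have hdp : 0 < p.degree := natDegree_pos_iff_degree_pos.mp hdeg_pos
  have h1 : Filter.Tendsto (fun x => p.eval x) Filter.atTop Filter.atTop :=
    tendsto_atTop_of_leadingCoeff_nonneg p hdp hlc.le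
  obtain ⟨b, hb⟩ : ∃ b, 0 < p.eval b := (h1.eventually_gt_atTop 0).exists
  set q := p.comp (-X) with hq
  have hnX : (-X : ℝ[X]).natDegree = 1 := by simp
  have hqdeg : q.natDegree = p.natDegree := by
    rw [hq, natDegree_comp, hnX, mul_one]
  have hqlc : q.leadingCoeff = -p.leadingCoeff := by
    rw [hq, leadingCoeff_comp (by rw [hnX]; omega)]
    have : (-X : ℝ[X]).leadingCoeff = -1 := by simp [leadingCoeff]
    rw [this, h.neg_one_pow]
    ring
  have hqdp : 0 < q.degree := by
    apply natDegree_pos_iff_degree_pos.mp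
    omega
  have h2 : Filter.Tendsto (fun x => q.eval x) Filter.atTop Filter.atBot :=
    tendsto_atBot_of_leadingCoeff_nonpos q hqdp (by rw [hqlc]; linarith)
  obtain ⟨a, hqa⟩ : ∃ a, q.eval a < 0 := (h2.eventually_lt_atBot 0).exists
  have ha : p.eval (-a) < 0 := by
    rw [hq, eval_comp] at hqa
    simpa using hqa
  have h0mem : (0 : ℝ) ∈ Set.Icc (p.eval (-a)) (p.eval b) := ⟨ha.le, hb.le⟩
  obtain ⟨x, hx⟩ := intermediate_value_univ (-a) b p.continuous h0mem
  exact ⟨x, hx⟩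

lemma exists_root_of_odd_natDegree (p : ℝ[X]) (h : Odd p.natDegree) :
    ∃ x, p.eval x = 0 := by
  have hdeg_pos : 0 < p.natDegree := by rcases h with ⟨j, hj⟩; omega
  have hp0 : p ≠ 0 := by
    intro h0
    rw [h0, natDegree_zero] at hdeg_pos
    omega
  rcases (leadingCoeff_ne_zero.mpr hp0).lt_or_gt with hneg | hpos
  · obtain ⟨x, hx⟩ := exists_root_aux (-p) (by rwa [natDegree_neg]) (by rw [leadingCoeff_neg]; linarith)
    exact ⟨x, by simpa [neg_eq_zero] using hx⟩
  · exact exists_root_aux p h hpos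

/-! ### The pencil polynomial -/

noncomputable def pencilPoly {m : ℕ} (P Q : Matrix (Fin m) (Fin m) ℝ) : ℝ[X] :=
  (Matrix.of fun i j => C (P i j) * X + C (Q i j)).det

lemma pencilPoly_eval {m : ℕ} (P Q : Matrix (Fin m) (Fin m) ℝ) (t : ℝ) :
    (pencilPoly P Q).eval t = (t • P + Q).det := by
  unfold pencilPoly
  rw [show ((Matrix.of fun i j => C (P i j) * X + C (Q i j)
      : Matrix (Fin m) (Fin m) ℝ[X]).det).eval t
    = (evalRingHom t) ((Matrix.of fun i j => C (P i j) * X + C (Q i j)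
      : Matrix (Fin m) (Fin m) ℝ[X]).det) from rfl]
  rw [RingHom.map_det]
  congr 1
  refine Matrix.ext fun i j => ?_
  rw [RingHom.mapMatrix_apply, Matrix.map_apply, Matrix.of_apply, Matrix.add_apply, Matrix.smul_apply, smul_eq_mul]
  simp only [coe_evalRingHom, eval_add, eval_mul, eval_C, eval_X]
  ring

lemma factor_natDegree_le {m : ℕ} (P Q : Matrix (Fin m) (Fin m) ℝ) (i j : Fin m) :
    ((Matrix.of fun i j => C (P i j) * X + C (Q i j) : Matrix (Fin m) (Fin m) ℝ[X]) i j).natDegree ≤ 1 := by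
  refine (natDegree_add_le _ _).trans (max_le ?_ ?_)
  · exact (natDegree_C_mul_le _ _).trans natDegree_X_le
  · simp

lemma factor_coeff_one {m : ℕ} (P Q : Matrix (Fin m) (Fin m) ℝ) (i j : Fin m) :
    ((Matrix.of fun i j => C (P i j) * X + C (Q i j) : Matrix (Fin m) (Fin m) ℝ[X]) i j).coeff 1 = P i j := by
  simp [coeff_C]

lemma pencilPoly_natDegree_le {m : ℕ} (P Q : Matrix (Fin m) (Fin m) ℝ) :
    (pencilPoly P Q).natDegree ≤ m := by
  unfold pencilPoly
  rw [Matrix.det_apply']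
  apply natDegree_sum_le_of_forall_le
  intro σ _
  refine natDegree_mul_le.trans ?_
  have h1 : (((Equiv.Perm.sign σ : ℤ) : ℝ[X])).natDegree = 0 := natDegree_intCast _
  rw [h1, zero_add]
  refine (natDegree_prod_le _ _).trans ?_
  calc ∑ i, ((Matrix.of fun i j => C (P i j) * X + C (Q i j) : Matrix (Fin m) (Fin m) ℝ[X]) (σ i) i).natDegree
      ≤ ∑ _i : Fin m, 1 := Finset.sum_le_sum fun i _ => factor_natDegree_le P Q (σ i) i
    _ = m := by simp

lemma pencilPoly_coeff_card {m : ℕ} (P Q : Matrix (Fin m) (Fin m) ℝ) :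
    (pencilPoly P Q).coeff m = P.det := by
  unfold pencilPoly
  rw [Matrix.det_apply', finset_sum_coeff, Matrix.det_apply']
  refine Finset.sum_congr rfl fun σ _ => ?_
  rw [← C_eq_intCast, coeff_C_mul]
  congr 1
  have h := coeff_prod_of_natDegree_le Finset.univ
    (fun i => (Matrix.of fun i j => C (P i j) * X + C (Q i j) : Matrix (Fin m) (Fin m) ℝ[X]) (σ i) i) 1
    (fun i _ => factor_natDegree_le P Q (σ i) i)
  rw [Finset.card_univ, Fintype.card_fin, mul_one] at h
  rw [h]
  exact Finset.prod_congr rfl fun i _ => factor_coeff_one P Q (σ i) i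

lemma pencilPoly_coeff_pred {m : ℕ} (P Q : Matrix (Fin m) (Fin m) ℝ) (a : Fin m)
    (ha : ∀ j, P a j = 0) :
    (pencilPoly P Q).coeff (m - 1) = (P.updateRow a (Q a)).det := by
  unfold pencilPoly
  rw [Matrix.det_apply', finset_sum_coeff, Matrix.det_apply']
  refine Finset.sum_congr rfl fun σ _ => ?_
  rw [← C_eq_intCast, coeff_C_mul]
  congr 1
  set i₀ := σ⁻¹ a with hi₀
  have hσ : σ i₀ = a := Equiv.apply_symm_apply σ a
  rw [← Finset.mul_prod_erase Finset.univ _ (Finset.mem_univ i₀),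
      ← Finset.mul_prod_erase Finset.univ _ (Finset.mem_univ i₀)]
  have hfac : (Matrix.of fun i j => C (P i j) * X + C (Q i j) : Matrix (Fin m) (Fin m) ℝ[X]) (σ i₀) i₀
      = C (Q a i₀) := by
    rw [hσ]
    show C (P a i₀) * X + C (Q a i₀) = C (Q a i₀)
    rw [ha i₀, map_zero, zero_mul, zero_add]
  rw [hfac, coeff_C_mul]
  have hcard : m - 1 = (Finset.univ.erase i₀).card * 1 := by
    rw [Finset.card_erase_of_mem (Finset.mem_univ i₀), Finset.card_univ, Fintype.card_fin, mul_one]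
  rw [hcard, coeff_prod_of_natDegree_le _ _ _ (fun i _ => factor_natDegree_le P Q (σ i) i)]
  have hup : (P.updateRow a (Q a)) (σ i₀) i₀ = Q a i₀ := by
    rw [hσ, Matrix.updateRow_self]
  rw [hup]
  congr 1
  refine Finset.prod_congr rfl fun i hi => ?_
  rw [factor_coeff_one]
  have hia : σ i ≠ a := by
    intro hcontra
    have : i = i₀ := by
      rw [hi₀, ← hcontra]
      exact (Equiv.symm_apply_apply σ i).symm
    exact (Finset.ne_of_mem_erase hi) this
  rw [Matrix.updateRow_ne hia]

lemma pencilPoly_add_single {m : ℕ} (P Q : Matrix (Fin m) (Fin m) ℝ) (a b : Fin m) (δ : ℝ) :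
    pencilPoly P (Q + Matrix.single a b δ)
      = pencilPoly P Q
        + C δ * pencilPoly (P.updateRow a 0) (Q.updateRow a (Pi.single b 1)) := by
  classical
  set Y : Matrix (Fin m) (Fin m) ℝ[X] :=
    Matrix.of fun i j => C (P i j) * X + C (Q i j) with hY
  set w : Fin m → ℝ[X] := fun j => C (δ * (Pi.single b 1 : Fin m → ℝ) j) with hw
  have hZ : (Matrix.of fun i j => C (P i j) * X + C ((Q + Matrix.single a b δ) i j)
        : Matrix (Fin m) (Fin m) ℝ[X])
      = Y.updateRow a (Y a + w) := by
    refine Matrix.ext fun i j => ?_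
    by_cases hia : i = a
    · rw [hia, Matrix.updateRow_self]
      show C (P a j) * X + C (Q a j + Matrix.single a b δ a j)
          = (C (P a j) * X + C (Q a j)) + C (δ * (Pi.single b 1 : Fin m → ℝ) j)
      rw [map_add, add_assoc]
      congr 2
      by_cases hjb : j = b
      · subst hjb
        rw [Matrix.single_apply_same, Pi.single_eq_same, mul_one]
      · rw [Matrix.single_apply_of_ne a b δ a j (fun h => hjb h.2.symm),
          Pi.single_eq_of_ne (M := fun _ : Fin m => ℝ) hjb 1, mul_zero]
    · rw [Matrix.updateRow_ne hia]
      show C (P i j) * X + C (Q i j + Matrix.single a b δ i j) = Y i j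
      rw [Matrix.single_apply_of_ne a b δ i j (fun h => hia h.1.symm), add_zero]
      rfl
  have hsm : w = (C δ) • fun j => C ((Pi.single b 1 : Fin m → ℝ) j) := by
    funext j
    simp [hw, smul_eq_mul, _root_.map_mul]
  have hY2 : Y.updateRow a (fun j => C ((Pi.single b 1 : Fin m → ℝ) j))
      = Matrix.of fun i j => C ((P.updateRow a 0) i j) * X + C ((Q.updateRow a (Pi.single b 1)) i j) := by
    refine Matrix.ext fun i j => ?_
    rw [Matrix.updateRow_apply, Matrix.of_apply]
    by_cases hia : i = a
    · rw [if_pos hia, Matrix.updateRow_apply, if_pos hia, Matrix.updateRow_apply, if_pos hia]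
      simp
    · rw [if_neg hia, Matrix.updateRow_apply, if_neg hia, Matrix.updateRow_apply, if_neg hia]
      rfl
  unfold pencilPoly
  rw [hZ, Matrix.det_updateRow_add, Matrix.updateRow_eq_self]
  congr 1
  rw [hsm, Matrix.det_updateRow_smul, hY2]

lemma pencilPoly_natDegree_eq {m : ℕ} (hm : 0 < m) (P Q : Matrix (Fin m) (Fin m) ℝ)
    (hdet : P.det = 0) (hc : (pencilPoly P Q).coeff (m - 1) ≠ 0) :
    (pencilPoly P Q).natDegree = m - 1 := by
  apply le_antisymm
  · rw [natDegree_le_iff_coeff_eq_zero]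
    intro j hj
    rcases eq_or_lt_of_le (show m ≤ j by omega) with rfl | hlt
    · rw [pencilPoly_coeff_card]; exact hdet
    · exact coeff_eq_zero_of_natDegree_lt (lt_of_le_of_lt (pencilPoly_natDegree_le P Q) hlt)
  · exact le_natDegree_of_ne_zero hc

/-! ### Frobenius norm helpers -/

lemma frobSq_nonneg {m n : ℕ} (A : Matrix (Fin m) (Fin n) ℝ) : 0 ≤ frobSq A := by
  unfold frobSq; positivity

lemma eq_of_frobSq_eq_zero {m n : ℕ} {A : Matrix (Fin m) (Fin n) ℝ}
    (h : frobSq A = 0) : A = 0 := by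
  have hz : ∀ i j, A i j = 0 := ?_
  · exact Matrix.ext fun i j => (hz i j).trans (Matrix.zero_apply _ _).symm
  intro i j
  by_contra hij
  have h1 : 0 < ‖A i j‖^2 := by
    have hn : ‖A i j‖ ≠ 0 := norm_ne_zero_iff.mpr hij
    positivity
  have h2 : ∀ i ∈ (Finset.univ : Finset (Fin m)), (0:ℝ) ≤ ∑ j, ‖A i j‖^2 :=
    fun i _ => by positivity
  unfold frobSq at h
  have h3 := (Finset.sum_eq_zero_iff_of_nonneg h2).mp h i (Finset.mem_univ i)
  have h4 := (Finset.sum_eq_zero_iff_of_nonneg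
    (fun j _ => by positivity : ∀ j ∈ (Finset.univ : Finset (Fin n)), (0:ℝ) ≤ ‖A i j‖^2)).mp h3 j
    (Finset.mem_univ j)
  linarith

lemma frobSq_stdBasisMatrix {m n : ℕ} (a : Fin m) (b : Fin n) (x : ℝ) :
    frobSq (Matrix.single a b x) = x^2 := by
  unfold frobSq
  have hentry : ∀ (i : Fin m) (j : Fin n),
      ‖Matrix.single a b x i j‖^2 = if i = a then (if j = b then x^2 else 0) else 0 := by
    intro i j
    by_cases hia : i = a
    · by_cases hjb : j = b
      · subst hia; subst hjb
        rw [Matrix.single_apply_same, if_pos rfl, if_pos rfl, Real.norm_eq_abs, sq_abs]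
      · rw [Matrix.single_apply_of_ne a b x i j (fun h => hjb h.2.symm),
          if_pos hia, if_neg hjb]
        simp
    · rw [Matrix.single_apply_of_ne a b x i j (fun h => hia h.1.symm), if_neg hia]
      simp
  simp only [hentry]
  simp

/-! ### Linear independence in the plane -/

lemma li_pair (x1 x2 y1 y2 : ℝ) (h : x1 * y2 - x2 * y1 ≠ 0) :
    LinearIndependent ℝ ![((x1, x2) : ℝ × ℝ), ((y1, y2) : ℝ × ℝ)] := by
  rw [linearIndependent_fin2]
  constructor
  · simp only [Matrix.cons_val_one, Matrix.head_cons, Matrix.cons_val_zero]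
    intro h0
    rw [Prod.mk_eq_zero] at h0
    exact h (by rw [h0.1, h0.2]; ring)
  · intro c hc
    simp only [Matrix.cons_val_one, Matrix.head_cons, Matrix.cons_val_zero] at hc
    rw [Prod.smul_mk, smul_eq_mul, smul_eq_mul, Prod.mk.injEq] at hc
    exact h (by linear_combination y1 * hc.2 - y2 * hc.1)

lemma not_li_of_mem_span (v x y : ℝ × ℝ)
    (hx : x ∈ Submodule.span ℝ {v}) (hy : y ∈ Submodule.span ℝ {v}) :
    ¬ LinearIndependent ℝ ![x, y] := by
  intro hli
  rw [linearIndependent_fin2] at hli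
  obtain ⟨c1, hc1⟩ := Submodule.mem_span_singleton.mp hx
  obtain ⟨c2, hc2⟩ := Submodule.mem_span_singleton.mp hy
  have hy0 : y ≠ 0 := by simpa using hli.1
  have hc2ne : c2 ≠ 0 := by
    intro h0
    exact hy0 (by rw [← hc2, h0, zero_smul])
  have := hli.2 (c1 / c2)
  apply this
  simp only [Matrix.cons_val_one, Matrix.head_cons, Matrix.cons_val_zero]
  rw [← hc2, ← hc1, smul_smul, div_mul_cancel₀ _ hc2ne]

end NoBestAux

open NoBestAux Polynomial in
/-- If a real `2k × 2k` pencil `(A, B)` has minimal ranks `(2k, 2k-1)` — i.e.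
some nontrivial combination has rank `2k - 1` and every combination outside
the span of that minimizer has rank `2k` — then its distance to
`B_{2k-1,2k-1}` is zero, yet no pencil of `B_{2k-1,2k-1}` attains it. -/
theorem no_best_approx_of_minRanks_2k_2km1 (k : ℕ) (hk : 0 < k)
    (A B : Matrix (Fin (2 * k)) (Fin (2 * k)) ℝ)
    (t₀ u₀ : ℝ) (h₀ : (t₀, u₀) ≠ 0)
    (hs : (t₀ • A + u₀ • B).rank = 2 * k - 1)
    (hr : ∀ t u : ℝ, ((t, u) : ℝ × ℝ) ∉ Submodule.span ℝ {((t₀, u₀) : ℝ × ℝ)} →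
      (t • A + u • B).rank = 2 * k) :
    (∀ ε : ℝ, 0 < ε → ∃ A' B' : Matrix (Fin (2 * k)) (Fin (2 * k)) ℝ,
      InBLowMinRanks A' B' ∧ pdist (A, B) (A', B') < ε) ∧
    ∀ A' B' : Matrix (Fin (2 * k)) (Fin (2 * k)) ℝ,
      InBLowMinRanks A' B' → 0 < pdist (A, B) (A', B') := by
  have hkpos : 0 < 2 * k := by omega
  have hs0 : (0:ℝ) < t₀^2 + u₀^2 := by
    have h01 : t₀ ≠ 0 ∨ u₀ ≠ 0 := by
      by_contra hboth
      push_neg at hboth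
      exact h₀ (by rw [hboth.1, hboth.2]; rfl)
    rcases h01 with h | h <;>
      nlinarith [mul_self_pos.mpr h, sq_nonneg t₀, sq_nonneg u₀]
  set M := t₀ • A + u₀ • B with hM
  set N := (-u₀) • A + t₀ • B with hN
  have hrankM : M.rank = 2*k - 1 := hs
  have hdetM : M.det = 0 := by
    by_contra hd
    have := rank_eq_of_det_ne_zero M hd
    omega
  have hadj := adjugate_ne_zero hkpos M hrankM
  obtain ⟨bi, ai, hba⟩ : ∃ i j, M.adjugate i j ≠ 0 := by
    by_contra hno
    push_neg at hno
    exact hadj (Matrix.ext fun i j => by simpa using hno i j)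
  have hdir : ∀ t : ℝ, ((t*t₀ - u₀, t*u₀ + t₀) : ℝ×ℝ) ∉
      Submodule.span ℝ {((t₀, u₀) : ℝ × ℝ)} := by
    intro t hmem
    obtain ⟨c, hc⟩ := Submodule.mem_span_singleton.mp hmem
    have h1 := congrArg Prod.fst hc
    have h2 := congrArg Prod.snd hc
    simp only [Prod.smul_fst, Prod.smul_snd, smul_eq_mul] at h1 h2
    have : t₀^2 + u₀^2 = 0 := by linear_combination u₀ * h1 - t₀ * h2
    linarith
  have hcombMN : ∀ lam : ℝ, lam • M + N = (lam*t₀ - u₀) • A + (lam*u₀ + t₀) • B := by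
    intro lam
    rw [hM, hN]
    refine Matrix.ext fun i j => ?_
    simp only [Matrix.add_apply, Matrix.smul_apply, smul_eq_mul]
    ring
  have hdetMN : ∀ lam : ℝ, (lam • M + N).det ≠ 0 := by
    intro lam h0
    have hlt := rank_lt_of_det_eq_zero hkpos _ h0
    rw [hcombMN lam, hr _ _ (hdir lam)] at hlt
    omega
  have hc1 : (pencilPoly M N).coeff (2*k - 1) = 0 := by
    by_contra hcne
    have hnd := pencilPoly_natDegree_eq hkpos M N hdetM hcne
    obtain ⟨x, hx⟩ := exists_root_of_odd_natDegree _
      (by rw [hnd]; exact ⟨k-1, by omega⟩)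
    rw [pencilPoly_eval] at hx
    exact hdetMN x hx
  constructor
  · -- approximation part
    intro ε hε
    set c := ε / (Real.sqrt (t₀^2+u₀^2) + 1) with hcdef
    have hsq : 0 < Real.sqrt (t₀^2+u₀^2) + 1 := by positivity
    have hcpos : 0 < c := div_pos hε hsq
    set δ := c * (t₀^2 + u₀^2) with hδdef
    have hδ0 : δ ≠ 0 := ne_of_gt (mul_pos hcpos hs0)
    set E := Matrix.single ai bi (1:ℝ) with hE
    set A' := A + (-(c*u₀)) • E with hA'
    set B' := B + (c*t₀) • E with hB'
    have hMA' : t₀ • A' + u₀ • B' = M := by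
      rw [hA', hB', hM]
      refine Matrix.ext fun i j => ?_
      simp only [Matrix.add_apply, Matrix.smul_apply, smul_eq_mul]
      ring
    have hstd : Matrix.single ai bi δ = δ • E := by
      rw [hE, Matrix.smul_single, smul_eq_mul, mul_one]
    have hNA' : (-u₀) • A' + t₀ • B' = N + Matrix.single ai bi δ := by
      rw [hstd, hA', hB', hN, hδdef]
      refine Matrix.ext fun i j => ?_
      simp only [Matrix.add_apply, Matrix.smul_apply, smul_eq_mul]
      ring
    -- the perturbed pencil polynomial has odd degree
    have hpred := pencilPoly_coeff_pred (M.updateRow ai 0)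
      (N.updateRow ai (Pi.single bi 1)) ai
      (fun j => by rw [Matrix.updateRow_self]; rfl)
    have hupcollapse : (M.updateRow ai 0).updateRow ai
        ((N.updateRow ai (Pi.single bi 1)) ai) = M.updateRow ai (Pi.single bi 1) := by
      rw [Matrix.updateRow_self]
      refine Matrix.ext fun i j => ?_
      by_cases hia : i = ai
      · subst hia
        simp [Matrix.updateRow_self]
      · simp [Matrix.updateRow_ne hia]
    have hcoeff : (pencilPoly M (N + Matrix.single ai bi δ)).coeff (2*k-1)
        = δ * M.adjugate bi ai := by
      rw [pencilPoly_add_single, coeff_add, hc1, zero_add, coeff_C_mul, hpred,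
        hupcollapse, ← Matrix.adjugate_apply]
    have hcne : (pencilPoly M (N + Matrix.single ai bi δ)).coeff (2*k-1) ≠ 0 := by
      rw [hcoeff]
      exact mul_ne_zero hδ0 hba
    have hnd := pencilPoly_natDegree_eq hkpos M _ hdetM hcne
    obtain ⟨lam, hlam⟩ := exists_root_of_odd_natDegree _
      (by rw [hnd]; exact ⟨k-1, by omega⟩)
    rw [pencilPoly_eval] at hlam
    refine ⟨A', B', ⟨t₀, u₀, lam*t₀ - u₀, lam*u₀ + t₀, ?_, ?_, ?_⟩, ?_⟩
    · apply li_pair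
      intro hcr
      have : t₀^2 + u₀^2 = 0 := by linear_combination hcr
      linarith
    · rw [hMA', hrankM]
    · have hcomb2 : (lam*t₀ - u₀) • A' + (lam*u₀ + t₀) • B'
          = lam • (t₀ • A' + u₀ • B') + ((-u₀) • A' + t₀ • B') := by
        refine Matrix.ext fun i j => ?_
        simp only [Matrix.add_apply, Matrix.smul_apply, smul_eq_mul]
        ring
      rw [hcomb2, hMA', hNA']
      have := rank_lt_of_det_eq_zero hkpos _ hlam
      omega
    · have hpd : pdist (A, B) (A', B')
          = Real.sqrt (frobSq (A - A') + frobSq (B - B')) := rfl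
      have hda0 : A - A' = (c*u₀) • E := by
        rw [hA']
        refine Matrix.ext fun i j => ?_
        simp only [Matrix.sub_apply, Matrix.add_apply, Matrix.smul_apply, smul_eq_mul]
        ring
      have hda : A - A' = Matrix.single ai bi (c*u₀) := by
        rw [hda0, hE, Matrix.smul_single, smul_eq_mul, mul_one]
      have hdb0 : B - B' = (-(c*t₀)) • E := by
        rw [hB']
        refine Matrix.ext fun i j => ?_
        simp only [Matrix.sub_apply, Matrix.add_apply, Matrix.smul_apply, smul_eq_mul]
        ring
      have hdb : B - B' = Matrix.single ai bi (-(c*t₀)) := by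
        rw [hdb0, hE, Matrix.smul_single, smul_eq_mul, mul_one]
      rw [hpd, hda, hdb, frobSq_stdBasisMatrix, frobSq_stdBasisMatrix]
      have hsum : (c*u₀)^2 + (-(c*t₀))^2 = c^2 * (t₀^2 + u₀^2) := by ring
      rw [hsum, Real.sqrt_mul (sq_nonneg c), Real.sqrt_sq hcpos.le]
      have hce : c * (Real.sqrt (t₀^2+u₀^2) + 1) = ε := div_mul_cancel₀ ε (ne_of_gt hsq)
      nlinarith [Real.sqrt_nonneg (t₀^2+u₀^2), hcpos]
  · -- no attainment part
    intro A' B' hmem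
    obtain ⟨t1, u1, t2, u2, hli, hr1, hr2⟩ := hmem
    have hne : ¬(A' = A ∧ B' = B) := by
      rintro ⟨rfl, rfl⟩
      have hnotboth : ¬(((t1,u1):ℝ×ℝ) ∈ Submodule.span ℝ {((t₀, u₀) : ℝ × ℝ)} ∧
          ((t2,u2):ℝ×ℝ) ∈ Submodule.span ℝ {((t₀, u₀) : ℝ × ℝ)}) := by
        rintro ⟨m1, m2⟩
        exact not_li_of_mem_span _ _ _ m1 m2 hli
      rcases not_and_or.mp hnotboth with hnm | hnm
      · have := hr t1 u1 hnm
        omega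
      · have := hr t2 u2 hnm
        omega
    have hpd : pdist (A, B) (A', B')
        = Real.sqrt (frobSq (A - A') + frobSq (B - B')) := rfl
    have hnonneg : 0 ≤ pdist (A, B) (A', B') := Real.sqrt_nonneg _
    rcases hnonneg.lt_or_eq with hlt | heq
    · exact hlt
    · exfalso
      have hS : frobSq (A - A') + frobSq (B - B') ≤ 0 := by
        rw [hpd] at heq
        exact Real.sqrt_eq_zero'.mp heq.symm
      have h1 := frobSq_nonneg (A - A')
      have h2 := frobSq_nonneg (B - B')
      have hA0 : A - A' = 0 := eq_of_frobSq_eq_zero (by linarith)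
      have hB0 : B - B' = 0 := eq_of_frobSq_eq_zero (by linarith)
      exact hne ⟨(sub_eq_zero.mp hA0).symm, (sub_eq_zero.mp hB0).symm⟩
end

section
/- Let k be a positive integer and let (A,B) be a real 2k×2k pencil such that tA + uB is invertible for every (t,u) ∈ ℝ²\{(0,0)}. If (A',B') ∈ B_{2k,2k−1} attains the minimum of ‖(A,B) − (C,D)‖ over all (C,D) ∈ B_{2k,2k−1}, then (A',B') has minimal ranks ρ(A',B') = (2k, 2k−1); that is, every best approximation of (A,B) on B_{2k,2k−1} lies in B_{2k,2k−1} \ (B_{2k,2k−2} ∪ B_{2k−1,2k−1}). -/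
open Matrix

/-- `(A', B')` lies in the orbit of the pencil `(A, B)` under the action of
`GL_m(F) × GL_n(F) × GL_2(F)` given by
`(P, U, T) · (A, B) = (P (t₁₁ A + t₁₂ B) Uᵀ, P (t₂₁ A + t₂₂ B) Uᵀ)`. -/
def InOrbit {F : Type*} [Field F] {m n : ℕ}
    (A B A' B' : Matrix (Fin m) (Fin n) F) : Prop :=
  ∃ (P : Matrix (Fin m) (Fin m) F) (U : Matrix (Fin n) (Fin n) F)
    (T : Matrix (Fin 2) (Fin 2) F),
    IsUnit P.det ∧ IsUnit U.det ∧ IsUnit T.det ∧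
    A' = P * (T 0 0 • A + T 0 1 • B) * U.transpose ∧
    B' = P * (T 1 0 • A + T 1 1 • B) * U.transpose

/-- The pencil `(A, B)` belongs to `B_{r,s}`: some pencil in its orbit has
first coefficient of rank `≤ r` and second coefficient of rank `≤ s`. -/
def InBset {F : Type*} [Field F] {m n : ℕ} (r s : ℕ)
    (A B : Matrix (Fin m) (Fin n) F) : Prop :=
  ∃ A' B', InOrbit A B A' B' ∧ A'.rank ≤ r ∧ B'.rank ≤ s


/-- The pencil `(A, B)` has minimal ranks `ρ(A, B) = (r, s)`:
`s` is the minimum of `rank (t A + u B)` over `(t, u) ≠ (0, 0)`, attained at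
some `(t₀, u₀)`, and `r` is the minimum of `rank (t A + u B)` over `(t, u)`
outside the span of the minimizer `(t₀, u₀)`. -/
def MinRanksAre {F : Type*} [Field F] {m n : ℕ}
    (A B : Matrix (Fin m) (Fin n) F) (r s : ℕ) : Prop :=
  ∃ t₀ u₀ : F, (t₀, u₀) ≠ 0 ∧ (t₀ • A + u₀ • B).rank = s ∧
    (∀ t u : F, (t, u) ≠ 0 → s ≤ (t • A + u • B).rank) ∧
    (∃ t₁ u₁ : F, ((t₁, u₁) : F × F) ∉ Submodule.span F {((t₀, u₀) : F × F)} ∧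
      (t₁ • A + u₁ • B).rank = r) ∧
    (∀ t u : F, ((t, u) : F × F) ∉ Submodule.span F {((t₀, u₀) : F × F)} →
      r ≤ (t • A + u • B).rank)

/-!
Rotating the parameter plane by `(t, u)` sends a pencil `(C, D)` to `(t C + u D, -u C + t D)` and
multiplies squared distances by `t² + u²`; in the rotated frame a pencil lies in `B_{n,n-1}` as
soon as its first coefficient is singular. Hence if `t A' + u B'` is singular, a best
approximation `(A', B')` must agree with `(A, B)` in the second rotated coefficient, because
replacing that coefficient by the one of `(A, B)` stays in `B_{n,n-1}`. Two independent singular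
directions would therefore force `(A', B') = (A, B)`, which has none. If `t A' + u B'` had rank
`≤ n - 2`, it would differ from the invertible `t A + u B` in some entry, and correcting that
entry keeps the rank `≤ n - 1` while strictly decreasing the distance.
-/

namespace Matrix

variable {K : Type*} [Field K] {m n : Type*} [Fintype n]

theorem rank_add_le (A B : Matrix m n K) : (A + B).rank ≤ A.rank + B.rank := by
  unfold rank
  rw [mulVecLin_add]
  exact (Submodule.finrank_mono (LinearMap.range_add_le _ _)).trans
    (Submodule.finrank_add_le_finrank_add_finrank _ _)

theorem rank_single_le [DecidableEq m] [DecidableEq n] (i : m) (j : n) (c : K) :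
    (single i j c).rank ≤ 1 := by
  have : single i j c = vecMulVec (Pi.single i 1) (Pi.single j c) := by
    ext a b
    simp only [single, of_apply, vecMulVec, Pi.single_apply, ite_and, mul_ite, ite_mul, one_mul,
      zero_mul, mul_zero]
    grind
  exact this ▸ rank_vecMulVec_le _ _

end Matrix

section Pencils

variable {F : Type*} [Field F]

theorem mk_mem_span_singleton_iff {t₀ u₀ t u : F} (h₀ : (t₀, u₀) ≠ 0) :
    (t, u) ∈ Submodule.span F {(t₀, u₀)} ↔ t₀ * u - u₀ * t = 0 := by
  rw [Submodule.mem_span_singleton]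
  constructor
  · rintro ⟨a, ha⟩
    simp only [Prod.smul_mk, smul_eq_mul, Prod.mk.injEq] at ha
    rw [← ha.1, ← ha.2]
    ring
  · intro h
    by_cases ht₀ : t₀ = 0
    · have hu₀ : u₀ ≠ 0 := by rintro rfl; exact h₀ (by simp [ht₀])
      exact ⟨u / u₀, by ext <;> simp only [Prod.smul_mk, smul_eq_mul] <;> grind⟩
    · exact ⟨t / t₀, by ext <;> simp only [Prod.smul_mk, smul_eq_mul] <;> grind⟩

theorem eq_and_eq_of_smul_add_smul_eq {M : Type*} [AddCommGroup M] [Module F M]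
    {a b c d : F} (hdet : a * d - b * c ≠ 0) {X Y X' Y' : M}
    (h₁ : a • X + b • Y = a • X' + b • Y') (h₂ : c • X + d • Y = c • X' + d • Y') :
    X = X' ∧ Y = Y' := by
  have hX : (a * d - b * c) • (X - X') = 0 := by
    linear_combination (norm := module) d • h₁ - b • h₂
  have hY : (a * d - b * c) • (Y - Y') = 0 := by
    linear_combination (norm := module) a • h₂ - c • h₁
  exact ⟨sub_eq_zero.1 ((smul_eq_zero.1 hX).resolve_left hdet),
    sub_eq_zero.1 ((smul_eq_zero.1 hY).resolve_left hdet)⟩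

theorem pair_ne_zero_of_det_ne_zero {t u t' u' : F} (h : t * u' - u * t' ≠ 0) :
    (t, u) ≠ 0 ∧ (t', u') ≠ 0 :=
  ⟨by rintro ⟨⟩; simp at h, by rintro ⟨⟩; simp at h⟩

variable {m n r s : ℕ} {C D : Matrix (Fin m) (Fin n) F}

theorem inBset_iff : InBset r s C D ↔ ∃ t u t' u' : F, t * u' - u * t' ≠ 0 ∧
    (t • C + u • D).rank ≤ r ∧ (t' • C + u' • D).rank ≤ s := by
  constructor
  · rintro ⟨_, _, ⟨P, U, T, hP, hU, hT, rfl, rfl⟩, hr, hs⟩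
    have hUt : IsUnit Uᵀ.det := by rwa [det_transpose]
    rw [rank_mul_eq_left_of_isUnit_det _ _ hUt, rank_mul_eq_right_of_isUnit_det _ _ hP] at hr hs
    exact ⟨T 0 0, T 0 1, T 1 0, T 1 1, by rwa [det_fin_two, isUnit_iff_ne_zero] at hT, hr, hs⟩
  · rintro ⟨t, u, t', u', hdet, hr, hs⟩
    refine ⟨_, _, ⟨1, 1, !![t, u; t', u'], by simp, by simp, ?_, rfl, rfl⟩, ?_, ?_⟩
    · simpa [det_fin_two_of] using hdet
    all_goals simpa

theorem inBset_of_rank_le {t u : F} (htu : (t, u) ≠ 0) (h : (t • C + u • D).rank ≤ s) :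
    InBset m s C D := by
  refine inBset_iff.2 ?_
  by_cases hu : u = 0
  · have ht : t ≠ 0 := by rintro rfl; exact htu (by simp [hu])
    exact ⟨0, 1, t, u, by simpa using ht, rank_le_height _, h⟩
  · exact ⟨1, 0, t, u, by simpa using hu, rank_le_height _, h⟩

end Pencils

section Frobenius

variable {m n : ℕ}

theorem frobSq_eq_sum_sq (X : Matrix (Fin m) (Fin n) ℝ) : frobSq X = ∑ i, ∑ j, X i j ^ 2 := by
  simp only [frobSq, Real.norm_eq_abs, sq_abs]

theorem frobSq_nonneg (X : Matrix (Fin m) (Fin n) ℝ) : 0 ≤ frobSq X := by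
  unfold frobSq
  positivity

theorem frobSq_eq_zero_iff {X : Matrix (Fin m) (Fin n) ℝ} : frobSq X = 0 ↔ X = 0 := by
  rw [frobSq_eq_sum_sq, ← Matrix.ext_iff]
  simp (disch := intros; positivity) only [Finset.sum_eq_zero_iff_of_nonneg, Finset.mem_univ,
    true_implies, sq_eq_zero_iff, Matrix.zero_apply]

theorem frobSq_sub_single (M : Matrix (Fin m) (Fin n) ℝ) (i : Fin m) (j : Fin n) :
    frobSq (M - single i j (M i j)) = frobSq M - M i j ^ 2 := by
  have hentry : ∀ a b,
      (M - single i j (M i j)) a b ^ 2 = M a b ^ 2 - single i j (M i j ^ 2) a b := by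
    intro a b
    by_cases ha : i = a <;> by_cases hb : j = b <;> simp [ha, hb]
  simp_rw [frobSq_eq_sum_sq, hentry, Finset.sum_sub_distrib]
  simp [single_apply, ite_and]

theorem frobSq_smul_add_smul (t u : ℝ) (X Y : Matrix (Fin m) (Fin n) ℝ) :
    frobSq (t • X + u • Y) + frobSq ((-u) • X + t • Y) =
      (t ^ 2 + u ^ 2) * (frobSq X + frobSq Y) := by
  simp only [frobSq_eq_sum_sq, ← Finset.sum_add_distrib, Finset.mul_sum]
  refine Finset.sum_congr rfl fun i _ => Finset.sum_congr rfl fun j _ => ?_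
  simp only [Matrix.add_apply, Matrix.smul_apply, smul_eq_mul]
  ring

theorem frobSq_sub_add_frobSq_sub_rotate (t u : ℝ) (A B C D : Matrix (Fin m) (Fin n) ℝ) :
    frobSq (t • A + u • B - (t • C + u • D)) + frobSq ((-u) • A + t • B - ((-u) • C + t • D)) =
      (t ^ 2 + u ^ 2) * (frobSq (A - C) + frobSq (B - D)) := by
  rw [← frobSq_smul_add_smul]
  congr 2 <;> module

theorem frobSq_add_frobSq_le_of_pdist_le
    {p q r : Matrix (Fin m) (Fin n) ℝ × Matrix (Fin m) (Fin n) ℝ} (h : pdist p q ≤ pdist p r) :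
    frobSq (p.1 - q.1) + frobSq (p.2 - q.2) ≤ frobSq (p.1 - r.1) + frobSq (p.2 - r.2) :=
  (Real.sqrt_le_sqrt_iff (add_nonneg (frobSq_nonneg _) (frobSq_nonneg _))).1 h

end Frobenius

theorem sq_add_sq_pos_of_ne_zero {t u : ℝ} (h : (t, u) ≠ 0) : 0 < t ^ 2 + u ^ 2 := by
  rcases eq_or_ne t 0 with rfl | ht
  · have hu : u ≠ 0 := by rintro rfl; exact h rfl
    positivity
  · positivity

section BestApprox

variable {n : ℕ} {A B A' B' : Matrix (Fin n) (Fin n) ℝ} {t u : ℝ}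

theorem frobSq_rotate_le_of_best
    (hbest : ∀ C D, InBset n (n - 1) C D → pdist (A, B) (A', B') ≤ pdist (A, B) (C, D))
    (htu : (t, u) ≠ 0) {X Y : Matrix (Fin n) (Fin n) ℝ} (hX : X.rank ≤ n - 1) :
    frobSq (t • A + u • B - (t • A' + u • B')) +
        frobSq ((-u) • A + t • B - ((-u) • A' + t • B')) ≤
      frobSq (t • A + u • B - X) + frobSq ((-u) • A + t • B - Y) := by
  have hρ := sq_add_sq_pos_of_ne_zero htu
  -- the pencil whose coefficients in the `(t, u)`-rotated frame are `(X, Y)`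
  set C := (t ^ 2 + u ^ 2)⁻¹ • (t • X - u • Y)
  set D := (t ^ 2 + u ^ 2)⁻¹ • (u • X + t • Y)
  have hX' : t • C + u • D = X := by
    rw [show t • C + u • D = (t ^ 2 + u ^ 2)⁻¹ • ((t ^ 2 + u ^ 2) • X) by module]
    exact inv_smul_smul₀ hρ.ne' X
  have hY' : (-u) • C + t • D = Y := by
    rw [show (-u) • C + t • D = (t ^ 2 + u ^ 2)⁻¹ • ((t ^ 2 + u ^ 2) • Y) by module]
    exact inv_smul_smul₀ hρ.ne' Y
  have hCD := frobSq_add_frobSq_le_of_pdist_le (hbest C D (inBset_of_rank_le htu (hX' ▸ hX)))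
  rw [← hX', ← hY', frobSq_sub_add_frobSq_sub_rotate, frobSq_sub_add_frobSq_sub_rotate]
  exact mul_le_mul_of_nonneg_left hCD hρ.le

theorem neg_smul_add_smul_eq_of_best
    (hbest : ∀ C D, InBset n (n - 1) C D → pdist (A, B) (A', B') ≤ pdist (A, B) (C, D))
    (htu : (t, u) ≠ 0) (hrank : (t • A' + u • B').rank ≤ n - 1) :
    (-u) • A' + t • B' = (-u) • A + t • B := by
  have h := frobSq_rotate_le_of_best hbest htu (Y := (-u) • A + t • B) hrank
  rw [sub_self, frobSq_eq_zero_iff.2 rfl, add_zero] at h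
  have h0 := le_antisymm (by linarith) (frobSq_nonneg _)
  exact (sub_eq_zero.1 (frobSq_eq_zero_iff.1 h0)).symm

theorem sub_one_le_rank_of_best (hn : 0 < n) (hunit : IsUnit (t • A + u • B).det)
    (hbest : ∀ C D, InBset n (n - 1) C D → pdist (A, B) (A', B') ≤ pdist (A, B) (C, D))
    (htu : (t, u) ≠ 0) : n - 1 ≤ (t • A' + u • B').rank := by
  by_contra! hlt
  set G := t • A + u • B
  set G' := t • A' + u • B'
  have hG : G.rank = n := by
    rw [rank_of_isUnit _ ((isUnit_iff_isUnit_det G).2 hunit), Fintype.card_fin]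
  obtain ⟨i, j, hij⟩ : ∃ i j, (G - G') i j ≠ 0 := by
    by_contra! h
    rw [sub_eq_zero.1 (Matrix.ext h)] at hG
    omega
  have hrank : (G' + single i j ((G - G') i j)).rank ≤ n - 1 :=
    (rank_add_le _ _).trans (by have := rank_single_le i j ((G - G') i j); omega)
  have h := frobSq_rotate_le_of_best hbest htu (Y := (-u) • A + t • B) hrank
  rw [sub_self, frobSq_eq_zero_iff.2 rfl, add_zero,
    sub_add_eq_sub_sub G G' (single i j _), frobSq_sub_single] at h
  have : 0 < (G - G') i j ^ 2 := by positivity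
  linarith [frobSq_nonneg ((-u) • A + t • B - ((-u) • A' + t • B'))]

theorem not_rank_le_of_best (hn : 0 < n) (hunit : IsUnit (t • A + u • B).det)
    (hbest : ∀ C D, InBset n (n - 1) C D → pdist (A, B) (A', B') ≤ pdist (A, B) (C, D))
    {t' u' : ℝ} (hdet : t * u' - u * t' ≠ 0) (hrank : (t • A' + u • B').rank ≤ n - 1) :
    ¬ (t' • A' + u' • B').rank ≤ n - 1 := by
  intro hrank'
  obtain ⟨htu, ht'u'⟩ := pair_ne_zero_of_det_ne_zero hdet
  obtain ⟨rfl, rfl⟩ := eq_and_eq_of_smul_add_smul_eq (a := -u) (b := t) (c := -u') (d := t')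
    (fun h => hdet (by linear_combination h)) (neg_smul_add_smul_eq_of_best hbest htu hrank)
    (neg_smul_add_smul_eq_of_best hbest ht'u' hrank')
  rw [rank_of_isUnit _ ((isUnit_iff_isUnit_det _).2 hunit), Fintype.card_fin] at hrank
  omega

end BestApprox

/-- If `(A, B)` is a real `2k × 2k` pencil with `t A + u B` invertible for all
`(t, u) ≠ (0, 0)`, then every best approximation `(A', B')` of `(A, B)` on
`B_{2k,2k-1}` has minimal ranks `(2k, 2k-1)`, i.e. lies in
`B_{2k,2k-1} \ (B_{2k,2k-2} ∪ B_{2k-1,2k-1})`. -/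
theorem best_approx_has_minRanks_2k_2km1 (k : ℕ) (hk : 0 < k)
    (A B A' B' : Matrix (Fin (2 * k)) (Fin (2 * k)) ℝ)
    (hC : ∀ t u : ℝ, (t, u) ≠ 0 → IsUnit (t • A + u • B).det)
    (hmem : InBset (2 * k) (2 * k - 1) A' B')
    (hbest : ∀ C D : Matrix (Fin (2 * k)) (Fin (2 * k)) ℝ,
      InBset (2 * k) (2 * k - 1) C D →
      pdist (A, B) (A', B') ≤ pdist (A, B) (C, D)) :
    MinRanksAre A' B' (2 * k) (2 * k - 1) ∧
    ¬ InBset (2 * k) (2 * k - 2) A' B' ∧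
    ¬ InBset (2 * k - 1) (2 * k - 1) A' B' := by
  have hn : 0 < 2 * k := by omega
  have hlow : ∀ t u : ℝ, (t, u) ≠ 0 → 2 * k - 1 ≤ (t • A' + u • B').rank :=
    fun t u htu => sub_one_le_rank_of_best hn (hC t u htu) hbest htu
  have hfull : ∀ t u t' u' : ℝ, t * u' - u * t' ≠ 0 → (t • A' + u • B').rank ≤ 2 * k - 1 →
      ¬ (t' • A' + u' • B').rank ≤ 2 * k - 1 := fun t u t' u' hdet =>
    not_rank_le_of_best hn (hC t u (pair_ne_zero_of_det_ne_zero hdet).1) hbest hdet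
  obtain ⟨t, u, t₀, u₀, hdet, -, hrank₀⟩ := inBset_iff.1 hmem
  have h₀ := (pair_ne_zero_of_det_ne_zero hdet).2
  have hdet₀ : t₀ * u - u₀ * t ≠ 0 := fun h => hdet (by linear_combination -h)
  refine ⟨⟨t₀, u₀, h₀, le_antisymm hrank₀ (hlow t₀ u₀ h₀), hlow,
    ⟨t, u, mt (mk_mem_span_singleton_iff h₀).1 hdet₀, ?_⟩, fun t' u' ht' => ?_⟩, ?_, ?_⟩
  · have := hfull t₀ u₀ t u hdet₀ hrank₀
    have := rank_le_height (t • A' + u • B')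
    omega
  · have := hfull t₀ u₀ t' u' (mt (mk_mem_span_singleton_iff h₀).2 ht') hrank₀
    omega
  · intro h
    obtain ⟨_, _, t', u', hdet', -, hrank'⟩ := inBset_iff.1 h
    have := hlow t' u' (pair_ne_zero_of_det_ne_zero hdet').2
    omega
  · intro h
    obtain ⟨t', u', t'', u'', hdet', hrank', hrank''⟩ := inBset_iff.1 h
    exact hfull t' u' t'' u'' hdet' hrank' hrank''
end
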